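/- Prefix and suffix contexts of an almost ground context have the same context class: if C = C1[C2] is an almost ground context written as the composition of contexts C1 and C2, then C belongs to the context class A if and only if both C1 and C2 belong to A, and C belongs to the context class S if and only if both C1 and C2 belong to S. -/
import Mathlib


namespace LCCtx

/-- The four sorts: bindings, environments, expressions and bound variables. -/
inductive TSort : Type where
  | Bind | Env | Exp | BV
deriving DecidableEq

/-- Many-sorted terms over the signature `emptyEnv : Env`, `env : Bind × Env → Env`
(theory symbols), free symbols `bind : BV × Exp → Bind`, `var : BV → Exp`,
`lam : BV × Exp → Exp`, `app : Exp × Exp → Exp`, `lett : Env × Exp → Exp`, sorted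
variables, and additionally the hole constant `[·]` of sort `Exp`.
A *context* is such a term with exactly one occurrence of the hole; a *term* (in the
ordinary sense) is one without holes. No function symbol has result sort `BV`. -/
inductive Tm : TSort → Type where
  | fvar : (σ : TSort) → ℕ → Tm σ
  | hole : Tm .Exp
  | emptyEnv : Tm .Env
  | env : Tm .Bind → Tm .Env → Tm .Env
  | bind : Tm .BV → Tm .Exp → Tm .Bind
  | var : Tm .BV → Tm .Exp
  | lam : Tm .BV → Tm .Exp → Tm .Exp
  | app : Tm .Exp → Tm .Exp → Tm .Exp
  | lett : Tm .Env → Tm .Exp → Tm .Exp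

/-- Number of occurrences of the hole. -/
def holes : {σ : TSort} → Tm σ → ℕ
  | _, .fvar _ _ => 0
  | _, .hole => 1
  | _, .emptyEnv => 0
  | _, .env b e => holes b + holes e
  | _, .bind x s => holes x + holes s
  | _, .var x => holes x
  | _, .lam x s => holes x + holes s
  | _, .app s t => holes s + holes t
  | _, .lett e s => holes e + holes s

/-- A context: exactly one occurrence of the hole. -/
def IsCtx {σ : TSort} (C : Tm σ) : Prop := holes C = 1

/-- A hole-free term. -/
def IsTm {σ : TSort} (t : Tm σ) : Prop := holes t = 0

/-- `fill C s` = `C[s]`: replace the hole(s) of `C` by `s`. -/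
def fill : {σ : TSort} → Tm σ → Tm .Exp → Tm σ
  | _, .fvar σ n, _ => .fvar σ n
  | _, .hole, u => u
  | _, .emptyEnv, _ => .emptyEnv
  | _, .env b e, u => .env (fill b u) (fill e u)
  | _, .bind x s, u => .bind (fill x u) (fill s u)
  | _, .var x, u => .var (fill x u)
  | _, .lam x s, u => .lam (fill x u) (fill s u)
  | _, .app s t, u => .app (fill s u) (fill t u)
  | _, .lett e s, u => .lett (fill e u) (fill s u)

/-- The equational theory LC (left-commutativity): the congruence generated by
`env(x, env(y, z)) = env(y, env(x, z))`, the hole being treated as a constant. -/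
inductive LC : {σ : TSort} → Tm σ → Tm σ → Prop
  | ax {x y : Tm .Bind} {z : Tm .Env} :
      LC (.env x (.env y z)) (.env y (.env x z))
  | refl {σ : TSort} (t : Tm σ) : LC t t
  | symm {σ : TSort} {s t : Tm σ} : LC s t → LC t s
  | trans {σ : TSort} {s t u : Tm σ} : LC s t → LC t u → LC s u
  | envC {b b' : Tm .Bind} {e e' : Tm .Env} :
      LC b b' → LC e e' → LC (.env b e) (.env b' e')
  | bindC {x x' : Tm .BV} {s s' : Tm .Exp} :
      LC x x' → LC s s' → LC (.bind x s) (.bind x' s')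
  | varC {x x' : Tm .BV} : LC x x' → LC (.var x) (.var x')
  | lamC {x x' : Tm .BV} {s s' : Tm .Exp} :
      LC x x' → LC s s' → LC (.lam x s) (.lam x' s')
  | appC {s s' t t' : Tm .Exp} :
      LC s s' → LC t t' → LC (.app s t) (.app s' t')
  | lettC {e e' : Tm .Env} {s s' : Tm .Exp} :
      LC e e' → LC s s' → LC (.lett e s) (.lett e' s')

/-- The set of (sorted) first-order variables occurring in a term. -/
def varsOf : {σ : TSort} → Tm σ → Finset (TSort × ℕ)
  | _, .fvar σ n => {(σ, n)}
  | _, .hole => ∅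
  | _, .emptyEnv => ∅
  | _, .env b e => varsOf b ∪ varsOf e
  | _, .bind x s => varsOf x ∪ varsOf s
  | _, .var x => varsOf x
  | _, .lam x s => varsOf x ∪ varsOf s
  | _, .app s t => varsOf s ∪ varsOf t
  | _, .lett e s => varsOf e ∪ varsOf s

/-- Almost ground: every occurring variable has a sort for which no function symbol has
that result sort; in this signature this is exactly the (empty) sort `BV`. -/
def AlmostGround {σ : TSort} (t : Tm σ) : Prop :=
  ∀ p ∈ varsOf t, p.1 = TSort.BV

/-- Context class `A` (application contexts): built only from the hole and applications
`app(·, s)` in the first argument, with `s` a hole-free term. -/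
inductive ClassA : {σ : TSort} → Tm σ → Prop
  | hole : ClassA .hole
  | app {C : Tm .Exp} {s : Tm .Exp} : ClassA C → holes s = 0 → ClassA (.app C s)

/-- The number of hole occurrences below a `lam`-symbol. -/
def holesUnderLam : {σ : TSort} → Tm σ → ℕ
  | _, .fvar _ _ => 0
  | _, .hole => 0
  | _, .emptyEnv => 0
  | _, .env b e => holesUnderLam b + holesUnderLam e
  | _, .bind x s => holesUnderLam x + holesUnderLam s
  | _, .var x => holesUnderLam x
  | _, .lam x s => holes x + holes s
  | _, .app s t => holesUnderLam s + holesUnderLam t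
  | _, .lett e s => holesUnderLam e + holesUnderLam s

/-- Context class `S` (surface contexts): a context whose hole does not occur below a
`lam`-symbol. -/
def ClassS {σ : TSort} (C : Tm σ) : Prop := IsCtx C ∧ holesUnderLam C = 0

end LCCtx

namespace LCCtx

theorem holes_fill {σ : TSort} (C : Tm σ) (u : Tm .Exp) :
    holes (fill C u) = holes C * holes u := by
  induction C <;> simp [fill, holes, *] <;> ring

theorem hul_le_holes {σ : TSort} (C : Tm σ) : holesUnderLam C ≤ holes C := by
  induction C <;> simp [holes, holesUnderLam] <;> omega

theorem hul_fill {σ : TSort} (C : Tm σ) (u : Tm .Exp) :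
    holesUnderLam (fill C u) + holesUnderLam C * holesUnderLam u =
      holesUnderLam C * holes u + holes C * holesUnderLam u := by
  induction C <;>
    simp only [fill, holes, holesUnderLam, holes_fill, Nat.add_mul, Nat.zero_mul,
      Nat.one_mul, Nat.zero_add, Nat.add_zero] <;>
    linarith

theorem classA_fill_iff {σ : TSort} (C1 : Tm σ) (C2 : Tm .Exp) (h2 : holes C2 = 1) :
    ClassA (fill C1 C2) ↔ ClassA C1 ∧ ClassA C2 := by
  induction C1 with
  | hole =>
    simp only [fill]
    exact ⟨fun h => ⟨ClassA.hole, h⟩, fun h => h.2⟩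
  | app s t ihs iht =>
    constructor
    · intro h
      cases h with
      | app hC hs =>
        have ht0 : holes t = 0 := by
          have := holes_fill t C2
          rw [hs, h2] at this
          omega
        obtain ⟨hA, hB⟩ := ihs.mp hC
        exact ⟨ClassA.app hA ht0, hB⟩
    · rintro ⟨h1, hB⟩
      cases h1 with
      | app hC hs =>
        have : holes (fill t C2) = 0 := by rw [holes_fill, hs]; ring
        exact ClassA.app (ihs.mpr ⟨hC, hB⟩) this
  | fvar σ n => constructor <;> rintro (⟨⟩ | ⟨h, -⟩)
  | emptyEnv => constructor <;> rintro (⟨⟩ | ⟨h, -⟩)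
  | env b e _ _ => constructor <;> rintro (⟨⟩ | ⟨h, -⟩)
  | bind x s _ _ => constructor <;> rintro (⟨⟩ | ⟨h, -⟩)
  | var x _ => constructor <;> rintro (⟨⟩ | ⟨h, -⟩)
  | lam x s _ _ => constructor <;> rintro (⟨⟩ | ⟨h, -⟩)
  | lett e s _ _ => constructor <;> rintro (⟨⟩ | ⟨h, -⟩)

/-- Prefix and suffix contexts of an almost ground context have the
same context class: if `C = C1[C2]` is an almost ground context written as the
composition of contexts `C1` and `C2`, then `C` belongs to class `A` iff both `C1` and
`C2` do, and `C` belongs to class `S` iff both `C1` and `C2` do. -/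
theorem context_class_of_composition {σ : TSort} (C1 : Tm σ) (C2 : Tm .Exp)
    (h1 : IsCtx C1) (h2 : IsCtx C2) (hg : AlmostGround (fill C1 C2)) :
    (ClassA (fill C1 C2) ↔ ClassA C1 ∧ ClassA C2) ∧
    (ClassS (fill C1 C2) ↔ ClassS C1 ∧ ClassS C2) := by
  have hfill : holes (fill C1 C2) = 1 := by
    rw [holes_fill, h1, h2]
  refine ⟨classA_fill_iff C1 C2 h2, ?_⟩
  have key := hul_fill C1 C2
  rw [h1, h2] at key
  have le1 := hul_le_holes C1
  have le2 := hul_le_holes C2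
  rw [h1] at le1; rw [h2] at le2
  unfold ClassS IsCtx
  constructor
  · rintro ⟨-, h0⟩
    rw [h0] at key
    constructor
    · exact ⟨h1, by nlinarith⟩
    · exact ⟨h2, by nlinarith⟩
  · rintro ⟨⟨-, hA⟩, ⟨-, hB⟩⟩
    rw [hA, hB] at key
    simp at key
    exact ⟨hfill, key⟩

end LCCtx
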